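/- Let G ⊆ (𝔽₂)^{2n} be a maximal pairwise anticommuting set with |G| = 2m+1 ≥ 3, and let J ⊆ G with |J| = 3. Then (G \ J) ∪ {sum of J} is again a maximal pairwise anticommuting set, of cardinality 2m−1. -/

import Mathlib

/-- The phase space `(𝔽₂)^{2n}`, modeled as pairs of vectors in `𝔽₂ⁿ`. -/
abbrev V (n : ℕ) := (Fin n → ZMod 2) × (Fin n → ZMod 2)

/-- The standard symplectic bilinear form `ω((a,b),(c,d)) = a·d + b·c`. -/
def sympl {n : ℕ} (P Q : V n) : ZMod 2 :=
  ∑ i, (P.1 i * Q.2 i + P.2 i * Q.1 i)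

/-- A finite set is (pairwise) anticommuting if `ω(P,Q) = 1` for all distinct `P, Q`. -/
def AC {n : ℕ} (G : Finset (V n)) : Prop :=
  ∀ P ∈ G, ∀ Q ∈ G, P ≠ Q → sympl P Q = 1

/-- A maximal pairwise anticommuting set: no strictly larger set is anticommuting. -/
def MaxAC {n : ℕ} (G : Finset (V n)) : Prop :=
  AC G ∧ ∀ H : Finset (V n), G ⊆ H → AC H → H = G

/-!
Replacing an odd subset `J` of a maximal anticommuting set `G` by its sum `s` keeps the set
anticommuting: `ω(s, y) = |J| = 1` for `y ∈ G \ J`, while `ω(s, a) = |J| - 1 = 0` for `a ∈ J`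
shows that `s` is none of the remaining elements. For maximality, suppose `R` anticommutes with
`s` and with `G \ J`. Then the corrected vector `R + ∑_{x ∈ J} (1 + ω(R, x)) x` anticommutes with
all of `G`, which is impossible since no vector anticommutes with a maximal set (it would
have to lie in it, but `ω(R, R) = 0`).
-/

open Finset

section Sympl

variable {n : ℕ}

lemma sympl_comm (P Q : V n) : sympl P Q = sympl Q P :=
  sum_congr rfl fun _ _ => by ring

lemma sympl_self (P : V n) : sympl P P = 0 :=
  sum_eq_zero fun i _ => by rw [mul_comm (P.2 i)]; exact CharTwo.add_self_eq_zero _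

lemma sympl_add_left (P Q R : V n) : sympl (P + Q) R = sympl P R + sympl Q R := by
  simp only [sympl, Prod.fst_add, Prod.snd_add, Pi.add_apply, ← sum_add_distrib]
  exact sum_congr rfl fun _ _ => by ring

lemma sympl_smul_left (c : ZMod 2) (P Q : V n) : sympl (c • P) Q = c • sympl P Q := by
  simp only [sympl, Prod.smul_fst, Prod.smul_snd, Pi.smul_apply, smul_eq_mul, mul_sum]
  exact sum_congr rfl fun _ _ => by ring

variable (n) in
def symplForm : LinearMap.BilinForm (ZMod 2) (V n) :=
  LinearMap.mk₂ (ZMod 2) sympl sympl_add_left sympl_smul_left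
    (fun P Q R => by rw [sympl_comm, sympl_add_left, sympl_comm Q, sympl_comm R])
    (fun c P Q => by rw [sympl_comm, sympl_smul_left, sympl_comm])

@[simp]
lemma symplForm_apply (P Q : V n) : symplForm n P Q = sympl P Q := rfl

lemma sympl_sum_right {ι : Type*} (s : Finset ι) (P : V n) (f : ι → V n) :
    sympl P (∑ i ∈ s, f i) = ∑ i ∈ s, sympl P (f i) :=
  (symplForm n).sum_right s P f

lemma sympl_sum_smul_left (J : Finset (V n)) (c : V n → ZMod 2) (y : V n) :
    sympl (∑ x ∈ J, c x • x) y = ∑ x ∈ J, c x * sympl x y := by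
  rw [← symplForm_apply, LinearMap.BilinForm.sum_left]
  simp only [LinearMap.map_smul₂, symplForm_apply, smul_eq_mul]

lemma sympl_sum_smul_left_of_forall {J : Finset (V n)} {y : V n}
    (hy : ∀ x ∈ J, sympl x y = 1) (c : V n → ZMod 2) :
    sympl (∑ x ∈ J, c x • x) y = ∑ x ∈ J, c x := by
  rw [sympl_sum_smul_left]
  exact sum_congr rfl fun x hx => by rw [hy x hx, mul_one]

lemma sympl_sum_smul_left_of_mem {J : Finset (V n)} (hJ : AC J) {y : V n} (hy : y ∈ J)
    (c : V n → ZMod 2) :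
    sympl (∑ x ∈ J, c x • x) y = ∑ x ∈ J, c x - c y := by
  have hJy : ∀ x ∈ J.erase y, sympl x y = 1 := fun x hx =>
    hJ x (mem_of_mem_erase hx) y hy (ne_of_mem_erase hx)
  rw [← add_sum_erase J _ hy, sympl_add_left, sympl_smul_left, sympl_self, smul_zero,
    zero_add, sympl_sum_smul_left_of_forall hJy, sum_erase_eq_sub hy]

end Sympl

section Anticommuting

variable {n : ℕ}

lemma AC.subset {s t : Finset (V n)} (ht : AC t) (hst : s ⊆ t) : AC s :=
  fun P hP Q hQ hPQ => ht P (hst hP) Q (hst hQ) hPQ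

lemma AC.insert_of_forall {s : Finset (V n)} (hs : AC s) {R : V n}
    (hR : ∀ y ∈ s, sympl R y = 1) : AC (insert R s) := by
  intro P hP Q hQ hPQ
  rcases mem_insert.1 hP with hPR | hPs <;> rcases mem_insert.1 hQ with hQR | hQs
  · exact absurd (hPR.trans hQR.symm) hPQ
  · exact hPR ▸ hR Q hQs
  · rw [hQR, sympl_comm]; exact hR P hPs
  · exact hs P hPs Q hQs hPQ

lemma maxAC_iff {G : Finset (V n)} : MaxAC G ↔ AC G ∧ ∀ R, ∃ y ∈ G, sympl R y ≠ 1 := by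
  refine ⟨fun hG => ⟨hG.1, fun R => ?_⟩, fun ⟨hG, hR⟩ => ⟨hG, fun H hGH hH => ?_⟩⟩
  · by_contra! hRG
    have hmem : R ∈ G :=
      hG.2 _ (subset_insert R G) (AC.insert_of_forall hG.1 hRG) ▸ mem_insert_self R G
    exact zero_ne_one ((sympl_self R).symm.trans (hRG R hmem))
  · refine Finset.Subset.antisymm (fun R hRH => ?_) hGH
    by_contra hRG
    obtain ⟨y, hy, hRy⟩ := hR R
    exact hRy (hH R hRH y (hGH hy) (fun h => hRG (h ▸ hy)))

variable {G J : Finset (V n)}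

lemma sympl_sum_of_mem_sdiff (hG : AC G) (hJG : J ⊆ G) (hJ : Odd J.card) {y : V n}
    (hy : y ∈ G \ J) : sympl (∑ x ∈ J, x) y = 1 := by
  obtain ⟨hyG, hyJ⟩ := mem_sdiff.1 hy
  have hJy : ∀ x ∈ J, sympl x y = 1 := fun x hx => hG x (hJG hx) y hyG (fun h => hyJ (h ▸ hx))
  simpa [ZMod.natCast_eq_one_iff_odd.2 hJ] using sympl_sum_smul_left_of_forall hJy (fun _ => 1)

lemma sympl_sum_of_mem (hJ : AC J) (hJodd : Odd J.card) {a : V n} (ha : a ∈ J) :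
    sympl (∑ x ∈ J, x) a = 0 := by
  simpa [ZMod.natCast_eq_one_iff_odd.2 hJodd] using sympl_sum_smul_left_of_mem hJ ha (fun _ => 1)

lemma sum_notMem_sdiff (hG : AC G) (hJG : J ⊆ G) (hJ : Odd J.card) : ∑ x ∈ J, x ∉ G \ J := by
  intro hs
  obtain ⟨a, ha⟩ := card_pos.1 hJ.pos
  have hsa := sympl_sum_of_mem (hG.subset hJG) hJ ha
  obtain ⟨hsG, hsJ⟩ := mem_sdiff.1 hs
  rw [hG _ hsG a (hJG ha) (fun h => hsJ (h ▸ ha))] at hsa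
  exact one_ne_zero hsa

lemma AC.insert_sum_sdiff (hG : AC G) (hJG : J ⊆ G) (hJ : Odd J.card) :
    AC (insert (∑ x ∈ J, x) (G \ J)) :=
  AC.insert_of_forall (hG.subset sdiff_subset) fun _ => sympl_sum_of_mem_sdiff hG hJG hJ

lemma card_insert_sum_sdiff (hG : AC G) (hJG : J ⊆ G) (hJ : Odd J.card) :
    (insert (∑ x ∈ J, x) (G \ J)).card = G.card - J.card + 1 := by
  rw [card_insert_of_notMem (sum_notMem_sdiff hG hJG hJ), card_sdiff_of_subset hJG]

lemma sympl_add_sum_smul_eq_one (hG : AC G) (hJG : J ⊆ G) (hJ : Odd J.card) {R : V n}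
    (hR : ∀ y ∈ insert (∑ x ∈ J, x) (G \ J), sympl R y = 1) {y : V n} (hy : y ∈ G) :
    sympl (R + ∑ x ∈ J, (1 + sympl R x) • x) y = 1 := by
  have hc : ∑ x ∈ J, (1 + sympl R x) = 0 := by
    rw [sum_add_distrib, ← sympl_sum_right, hR _ (mem_insert_self _ _)]
    simp only [sum_const, nsmul_one, ZMod.natCast_eq_one_iff_odd.2 hJ]
    decide
  rw [sympl_add_left]
  by_cases hyJ : y ∈ J
  · rw [sympl_sum_smul_left_of_mem (hG.subset hJG) hyJ, hc]
    generalize sympl R y = t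
    revert t; decide
  · have hJy : ∀ x ∈ J, sympl x y = 1 := fun x hx => hG x (hJG hx) y hy (fun h => hyJ (h ▸ hx))
    rw [sympl_sum_smul_left_of_forall hJy, hc, add_zero,
      hR y (mem_insert_of_mem (mem_sdiff.2 ⟨hy, hyJ⟩))]

lemma MaxAC.insert_sum_sdiff (hG : MaxAC G) (hJG : J ⊆ G) (hJ : Odd J.card) :
    MaxAC (insert (∑ x ∈ J, x) (G \ J)) := by
  refine maxAC_iff.2 ⟨AC.insert_sum_sdiff hG.1 hJG hJ, fun R => ?_⟩
  by_contra! hR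
  obtain ⟨y, hy, hne⟩ := (maxAC_iff.1 hG).2 (R + ∑ x ∈ J, (1 + sympl R x) • x)
  exact hne (sympl_add_sum_smul_eq_one hG.1 hJG hJ hR hy)

end Anticommuting

theorem stmt_13_general {n m : ℕ} (G J : Finset (V n)) (hG : MaxAC G)
    (hcard : G.card = 2 * m + 1) (hJG : J ⊆ G) (hJ : J.card = 3) :
    MaxAC (insert (∑ x ∈ J, x) (G \ J)) ∧
      (insert (∑ x ∈ J, x) (G \ J)).card = 2 * m - 1 := by
  have hodd : Odd J.card := hJ ▸ by decide
  refine ⟨hG.insert_sum_sdiff hJG hodd, ?_⟩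
  have hJle := card_le_card hJG
  rw [card_insert_sum_sdiff hG.1 hJG hodd]
  omega

theorem stmt_13 {n m : ℕ} (G J : Finset (V n)) (hG : MaxAC G)
    (hcard : G.card = 2 * m + 1) (hm : 1 ≤ m) (hJG : J ⊆ G) (hJ : J.card = 3) :
    MaxAC (insert (∑ x ∈ J, x) (G \ J)) ∧
      (insert (∑ x ∈ J, x) (G \ J)).card = 2 * m - 1 :=
  stmt_13_general G J hG hcard hJG hJ
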